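/- Let A be a positive operator on H, let 𝔸 = A ⊕ ⋯ ⊕ A (d copies) on H^d, and let 𝕋 = (T_{ij}) be a d×d operator matrix with each T_{ij} A-bounded. Then 𝕋 is 𝔸-bounded and ‖𝕋‖_𝔸 ≤ ‖(‖T_{ij}‖_A)_{d×d}‖, the operator norm of the d×d nonnegative real matrix of A-seminorms. -/

import Mathlib

open ContinuousLinearMap

variable {H : Type*} [NormedAddCommGroup H] [InnerProductSpace ℂ H] [CompleteSpace H]

/-- The seminorm `‖x‖_A = ‖A^{1/2} x‖ = √⟨Ax, x⟩` induced by a positive operator `A`. -/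
noncomputable def anorm (A : H →L[ℂ] H) (x : H) : ℝ :=
  Real.sqrt (A.reApplyInnerSelf x)

/-- `T` is `A`-bounded: `‖Tx‖_A ≤ c ‖x‖_A` for some `c > 0`. -/
def ABounded (A T : H →L[ℂ] H) : Prop :=
  ∃ c : ℝ, 0 < c ∧ ∀ x : H, anorm A (T x) ≤ c * anorm A x

/-- The operator seminorm `‖T‖_A`: the least `c ≥ 0` with `‖Tx‖_A ≤ c ‖x‖_A` for all `x`. -/
noncomputable def aNorm (A T : H →L[ℂ] H) : ℝ :=
  sInf {c : ℝ | 0 ≤ c ∧ ∀ x : H, anorm A (T x) ≤ c * anorm A x}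

/-- The `A`-spectral radius `r_A(T) = inf_{n ≥ 1} ‖T^n‖_A^{1/n}`. -/
noncomputable def aSpecRad (A T : H →L[ℂ] H) : ℝ :=
  ⨅ n : ℕ+, aNorm A (T ^ (n : ℕ)) ^ ((n : ℝ)⁻¹)

/-- The `A`-numerical radius `ω_A(T) = sup {|⟨ATx, x⟩| : ‖x‖_A = 1}`. -/
noncomputable def aNumRad (A T : H →L[ℂ] H) : ℝ :=
  sSup {c : ℝ | ∃ x : H, anorm A x = 1 ∧ c = ‖(inner ℂ (A (T x)) x : ℂ)‖}

/-- The operator on `H^d` (with the `ℓ²` product structure) given by a `d × d`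
matrix of operators: `(matOp T) x i = ∑ j, T i j (x j)`. -/
noncomputable def matOp {d : ℕ} (T : Fin d → Fin d → (H →L[ℂ] H)) :
    PiLp 2 (fun _ : Fin d => H) →L[ℂ] PiLp 2 (fun _ : Fin d => H) :=
  (((PiLp.continuousLinearEquiv 2 ℂ (fun _ : Fin d => H)).symm :
      (∀ _ : Fin d, H) →L[ℂ] PiLp 2 (fun _ : Fin d => H))) ∘L
    (ContinuousLinearMap.pi fun i => ∑ j, (T i j) ∘L
      ((ContinuousLinearMap.proj j) ∘L
        ((PiLp.continuousLinearEquiv 2 ℂ (fun _ : Fin d => H)) :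
          PiLp 2 (fun _ : Fin d => H) →L[ℂ] (∀ _ : Fin d, H))))

/-! Since `‖x‖_A = ‖A^{1/2} x‖`, the `A`-seminorm obeys the triangle inequality, so
`‖(𝕋x)_i‖_A ≤ ∑_j ‖T_ij‖_A ‖x_j‖_A = (M v)_i` with `M = (‖T_ij‖_A)` and `v = (‖x_j‖_A)_j`.
As `‖x‖_𝔸 = ‖v‖` and `‖𝕋x‖_𝔸` is the Euclidean norm of a vector dominated componentwise
by `M v`, we get `‖𝕋x‖_𝔸 ≤ ‖M‖ ‖x‖_𝔸`. -/

section

omit [CompleteSpace H]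

variable {A T : H →L[ℂ] H}

theorem anorm_nonneg (A : H →L[ℂ] H) (x : H) : 0 ≤ anorm A x := Real.sqrt_nonneg _

theorem anorm_sq (hA : A.IsPositive) (x : H) : anorm A x ^ 2 = A.reApplyInnerSelf x :=
  Real.sq_sqrt (hA.2 x)

theorem ABounded.anorm_apply_le_aNorm_mul (hT : ABounded A T) (x : H) :
    anorm A (T x) ≤ aNorm A T * anorm A x := by
  obtain ⟨c, hc, hcT⟩ := hT
  rcases (anorm_nonneg A x).eq_or_lt with hx | hx
  · simpa [← hx] using hcT x
  · rw [← div_le_iff₀ hx]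
    exact le_csInf ⟨c, hc.le, hcT⟩ fun b hb => (div_le_iff₀ hx).2 (hb.2 x)

theorem aBounded_and_aNorm_le_of_forall_le {c : ℝ} (hc : 0 ≤ c)
    (h : ∀ x, anorm A (T x) ≤ c * anorm A x) : ABounded A T ∧ aNorm A T ≤ c := by
  refine ⟨⟨c + 1, by positivity, fun x => (h x).trans ?_⟩, csInf_le ⟨0, fun _ hb => hb.1⟩ ⟨hc, h⟩⟩
  gcongr
  · exact anorm_nonneg A x
  · linarith

variable {d : ℕ}

theorem matOp_apply (T : Fin d → Fin d → (H →L[ℂ] H)) (x : PiLp 2 (fun _ : Fin d => H))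
    (i : Fin d) : matOp T x i = ∑ j, T i j (x j) := by
  simp [matOp]

theorem matOp_diag_apply (A : H →L[ℂ] H) (x : PiLp 2 (fun _ : Fin d => H)) (i : Fin d) :
    (matOp fun i j => if i = j then A else 0) x i = A (x i) := by
  rw [matOp_apply, Fintype.sum_eq_single i fun j hj => by simp [Ne.symm hj]]
  simp

theorem anorm_matOp_diag (hA : A.IsPositive) (x : PiLp 2 (fun _ : Fin d => H)) :
    anorm (matOp fun i j => if i = j then A else 0) x =
      ‖(WithLp.toLp 2 fun i => anorm A (x i) : EuclideanSpace ℝ (Fin d))‖ := by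
  simp only [EuclideanSpace.norm_eq, Real.norm_eq_abs, sq_abs, anorm_sq hA]
  simp only [anorm, reApplyInnerSelf_apply, PiLp.inner_apply, matOp_diag_apply, map_sum]

end

open Matrix in
theorem Matrix.norm_le_opNorm_toEuclideanCLM_mul {ι : Type*} [Fintype ι] [DecidableEq ι]
    (M : Matrix ι ι ℝ) {u v : EuclideanSpace ℝ ι} (hu : ∀ i, 0 ≤ u i)
    (huv : ∀ i, u i ≤ (M *ᵥ v.ofLp) i) : ‖u‖ ≤ ‖toEuclideanCLM (𝕜 := ℝ) M‖ * ‖v‖ :=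
  calc ‖u‖ ≤ ‖toEuclideanCLM (𝕜 := ℝ) M v‖ := by
        simp only [EuclideanSpace.norm_eq, Real.norm_eq_abs, sq_abs, ofLp_toEuclideanCLM]
        gcongr with i
        exacts [hu i, huv i]
    _ ≤ _ := le_opNorm _ v

section

variable {A : H →L[ℂ] H} (hA : A.IsPositive)
include hA

theorem anorm_eq_norm_sqrt_apply (x : H) : anorm A x = ‖CFC.sqrt A x‖ := by
  have hsqrt : adjoint (CFC.sqrt A) ∘L CFC.sqrt A = A := by
    rw [← star_eq_adjoint, (IsSelfAdjoint.of_nonneg (CFC.sqrt_nonneg A)).star_eq]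
    exact CFC.sqrt_mul_sqrt_self A ((nonneg_iff_isPositive A).2 hA)
  rw [apply_norm_eq_sqrt_inner_adjoint_left, hsqrt, anorm, reApplyInnerSelf_apply]

theorem anorm_sum_le {ι : Type*} (s : Finset ι) (x : ι → H) :
    anorm A (∑ i ∈ s, x i) ≤ ∑ i ∈ s, anorm A (x i) := by
  simp only [anorm_eq_norm_sqrt_apply hA, map_sum]
  exact norm_sum_le _ _

theorem anorm_matOp_le {d : ℕ} {T : Fin d → Fin d → (H →L[ℂ] H)}
    (hT : ∀ i j, ABounded A (T i j)) (x : PiLp 2 (fun _ : Fin d => H)) :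
    anorm (matOp fun i j => if i = j then A else 0) (matOp T x) ≤
      ‖Matrix.toEuclideanCLM (𝕜 := ℝ) (Matrix.of fun i j => aNorm A (T i j))‖ *
        anorm (matOp fun i j => if i = j then A else 0) x := by
  rw [anorm_matOp_diag hA, anorm_matOp_diag hA]
  refine Matrix.norm_le_opNorm_toEuclideanCLM_mul _ (fun i => anorm_nonneg A _) fun i => ?_
  calc anorm A (matOp T x i) ≤ ∑ j, anorm A (T i j (x j)) := by
        rw [matOp_apply]; exact anorm_sum_le hA _ _
    _ ≤ ∑ j, aNorm A (T i j) * anorm A (x j) :=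
        Finset.sum_le_sum fun j _ => (hT i j).anorm_apply_le_aNorm_mul (x j)
    _ = _ := rfl

end

/-- a `d × d` matrix `𝕋 = (T_{ij})` of `A`-bounded operators is
`𝔸 = diag(A,…,A)`-bounded on `H^d`, and `‖𝕋‖_𝔸` is at most the (ℓ²→ℓ²) operator norm
of the nonnegative real matrix `(‖T_{ij}‖_A)`. -/
theorem stmt7 {d : ℕ} (A : H →L[ℂ] H) (hA : A.IsPositive)
    (T : Fin d → Fin d → (H →L[ℂ] H)) (hT : ∀ i j, ABounded A (T i j)) :
    ABounded (matOp fun i j => if i = j then A else 0) (matOp T) ∧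
      aNorm (matOp fun i j => if i = j then A else 0) (matOp T) ≤
        ‖Matrix.toEuclideanCLM (𝕜 := ℝ) (Matrix.of fun i j => aNorm A (T i j))‖ :=
  aBounded_and_aNorm_le_of_forall_le (norm_nonneg _) (anorm_matOp_le hA hT)
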